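/- There is no g ∈ G = GL₂(Z) ⋉ Z² mapping the segment e₁ from (1/5,0) to (0,1/5) onto the segment e₃ from (2/5,0) to (1/5,1/5). More generally, no G-map sends any open subsegment of e₁ onto an open subsegment of e₃. -/

import Mathlib

noncomputable section

/-- The lattice `(1/d)ℤ × (1/d)ℤ` inside `ℝ × ℝ`. -/
def Ld (d : ℕ) : Set (ℝ × ℝ) :=
  {p | ∃ a b : ℤ, p = ((a : ℝ) / d, (b : ℝ) / d)}

/-- A `d`-minimal triangle: vertices in `L_d`, not collinear, and the closed triangle
meets `L_d` exactly in its three vertices. -/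
def IsMinimalTriangle (d : ℕ) (p q r : ℝ × ℝ) : Prop :=
  p ∈ Ld d ∧ q ∈ Ld d ∧ r ∈ Ld d ∧
    ¬ Collinear ℝ ({p, q, r} : Set (ℝ × ℝ)) ∧
    convexHull ℝ ({p, q, r} : Set (ℝ × ℝ)) ∩ Ld d = {p, q, r}

/-- An element of `G = GL₂(ℤ) ⋉ ℤ²`: an integer matrix `[[a,b],[c,e]]` of determinant
`±1` together with an integer translation vector `(v1, v2)`. -/
structure GMap where
  a : ℤ
  b : ℤ
  c : ℤ
  e : ℤ
  v1 : ℤ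
  v2 : ℤ
  unimod : a * e - b * c = 1 ∨ a * e - b * c = -1

/-- The affine action `x ↦ Ux + v` of a `GMap` on `ℝ²`. -/
def GMap.app (g : GMap) (p : ℝ × ℝ) : ℝ × ℝ :=
  ((g.a : ℝ) * p.1 + (g.b : ℝ) * p.2 + (g.v1 : ℝ),
   (g.c : ℝ) * p.1 + (g.e : ℝ) * p.2 + (g.v2 : ℝ))

/-- A `d`-minimal segment: endpoints in `L_d`, distinct, and the closed segment meets
`L_d` exactly in its two endpoints. -/
def IsMinimalSegment (d : ℕ) (p q : ℝ × ℝ) : Prop :=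
  p ∈ Ld d ∧ q ∈ Ld d ∧ p ≠ q ∧ segment ℝ p q ∩ Ld d = {p, q}

/-- The point of `L_d` with integer numerator data `p : ℤ × ℤ`. -/
def pt (d : ℕ) (p : ℤ × ℤ) : ℝ × ℝ := ((p.1 : ℝ) / d, (p.2 : ℝ) / d)

/-- Counterclockwise orientation of the ordered triple of numerator data. -/
def ccwZ (p q r : ℤ × ℤ) : Prop :=
  0 < (q.1 - p.1) * (r.2 - p.2) - (q.2 - p.2) * (r.1 - p.1)

/-- Weight (mod `d`) of the oriented minimal segment from `(w/d, x/d)` to `(y/d, z/d)`,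
given by numerator data `(w,x)` and `(y,z)`. -/
def segWeight (d : ℕ) (p q : ℤ × ℤ) : ZMod d :=
  ((p.1 * q.2 - p.2 * q.1 : ℤ) : ZMod d)

/-- The multiset of weights of the three edges `p→q`, `q→r`, `r→p` of a triangle
given by numerator data. -/
def triWeight (d : ℕ) (p q r : ℤ × ℤ) : Multiset (ZMod d) :=
  {segWeight d p q, segWeight d q r, segWeight d r p}

/-- The segment `e₁` from `(1/5, 0)` to `(0, 1/5)`. -/
def e1 : Set (ℝ × ℝ) := segment ℝ (((1 : ℝ) / 5, (0 : ℝ))) ((0, (1 : ℝ) / 5))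

/-- The segment `e₃` from `(2/5, 0)` to `(1/5, 1/5)`. -/
def e3 : Set (ℝ × ℝ) := segment ℝ (((2 : ℝ) / 5, (0 : ℝ))) (((1 : ℝ) / 5, (1 : ℝ) / 5))

/-!
Both segments lie on level lines of the form `φ(x, y) = x + y`: `e₁` on `φ = 1/5` and `e₃` on
`φ = 2/5`. If a map `x ↦ Ux + v` of `G` sends two distinct points of a level line `φ = s` into a
level line `φ = t`, then `φ ∘ U` vanishes on the direction `(1, -1)`, so `φ ∘ U = m φ` with
`m ∣ det U = ±1`. Hence `t = ±s + n` with `n = φ(v) ∈ ℤ`, which fails for `s = 1/5`, `t = 2/5`.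
-/

lemma segment_subset_sum_eq {p q : ℝ × ℝ} {s : ℝ} (hp : p.1 + p.2 = s) (hq : q.1 + q.2 = s) :
    segment ℝ p q ⊆ {x | x.1 + x.2 = s} :=
  (convex_hyperplane IsLinearMap.isLinearMap_add s).segment_subset hp hq

lemma e1_subset : e1 ⊆ {x | x.1 + x.2 = 1 / 5} :=
  segment_subset_sum_eq (by norm_num) (by norm_num)

lemma e3_subset : e3 ⊆ {x | x.1 + x.2 = 2 / 5} :=
  segment_subset_sum_eq (by norm_num) (by norm_num)

lemma openSegment_nontrivial {E : Type*} [AddCommGroup E] [Module ℝ E] {a b : E}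
    (hab : a ≠ b) : (openSegment ℝ a b).Nontrivial := by
  rw [openSegment_eq_image_lineMap]
  exact (Set.Ioo_infinite zero_lt_one).nontrivial.image (AffineMap.lineMap_injective ℝ hab)

lemma GMap.app_fst_add_snd (g : GMap) (p : ℝ × ℝ) :
    (g.app p).1 + (g.app p).2 =
      ((g.a : ℝ) + g.c) * p.1 + ((g.b : ℝ) + g.e) * p.2 + ((g.v1 : ℝ) + g.v2) := by
  simp only [GMap.app]
  ring

lemma GMap.exists_int_eq_of_sum_eq (g : GMap) {p q : ℝ × ℝ} (hpq : p ≠ q) {s t : ℝ}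
    (hp : p.1 + p.2 = s) (hq : q.1 + q.2 = s)
    (hgp : (g.app p).1 + (g.app p).2 = t) (hgq : (g.app q).1 + (g.app q).2 = t) :
    ∃ n : ℤ, t = s + n ∨ t = -s + n := by
  rw [g.app_fst_add_snd] at hgp hgq
  have hpq₁ : p.1 ≠ q.1 := fun h => hpq (Prod.ext h (by linarith))
  have hdir : ((g.a : ℝ) + g.c - (g.b + g.e)) * (p.1 - q.1) = 0 := by
    linear_combination hgp - hgq - ((g.b : ℝ) + g.e) * (hp - hq)
  have hcolR : (g.a : ℝ) + g.c = g.b + g.e :=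
    sub_eq_zero.mp ((mul_eq_zero.mp hdir).resolve_right (sub_ne_zero.mpr hpq₁))
  have hcol : g.a + g.c = g.b + g.e := by exact_mod_cast hcolR
  -- with `m = a + c = b + e`, the determinant `a e - b c` equals `m (a - b)`
  have hm : g.b + g.e = 1 ∨ g.b + g.e = -1 := by
    rcases g.unimod with h | h
    · exact Int.eq_one_or_neg_one_of_mul_eq_one (v := g.a - g.b)
        (by linear_combination h + g.b * hcol)
    · exact Int.eq_one_or_neg_one_of_mul_eq_one (v := g.b - g.a)
        (by linear_combination -h - g.b * hcol)
  have ht : t = ((g.b + g.e : ℤ) : ℝ) * s + ((g.v1 + g.v2 : ℤ) : ℝ) := by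
    push_cast
    linear_combination -hgp + ((g.b : ℝ) + g.e) * hp + p.1 * hcolR
  refine ⟨g.v1 + g.v2, ?_⟩
  rcases hm with hm | hm
  · left; rw [ht, hm]; push_cast; ring
  · right; rw [ht, hm]; push_cast; ring

lemma GMap.not_mapsTo_e1_e3 (g : GMap) {S : Set (ℝ × ℝ)} (hS : S ⊆ e1) (hS' : S.Nontrivial) :
    ¬ Set.MapsTo g.app S e3 := by
  intro hmaps
  obtain ⟨p, hp, q, hq, hpq⟩ := hS'
  obtain ⟨n, hn | hn⟩ := g.exists_int_eq_of_sum_eq hpq (e1_subset (hS hp)) (e1_subset (hS hq))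
    (e3_subset (hmaps hp)) (e3_subset (hmaps hq))
  · have : ((5 * n : ℤ) : ℝ) = 1 := by push_cast; linarith
    have : 5 * n = 1 := by exact_mod_cast this
    omega
  · have : ((5 * n : ℤ) : ℝ) = 3 := by push_cast; linarith
    have : 5 * n = 3 := by exact_mod_cast this
    omega

/-- no `G`-map sends `e₁` onto `e₃`; more generally, no `G`-map sends
any open subsegment of `e₁` onto an open subsegment of `e₃`. -/
theorem no_G_map_e1_to_e3 :
    (¬ ∃ g : GMap, g.app '' e1 = e3) ∧
    ¬ ∃ (g : GMap) (a b c d : ℝ × ℝ), a ≠ b ∧ c ≠ d ∧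
        openSegment ℝ a b ⊆ e1 ∧ openSegment ℝ c d ⊆ e3 ∧
        g.app '' openSegment ℝ a b = openSegment ℝ c d := by
  constructor
  · rintro ⟨g, hg⟩
    have he1 : e1.Nontrivial :=
      Set.nontrivial_of_mem_mem_ne (left_mem_segment ℝ _ _) (right_mem_segment ℝ _ _) (by norm_num)
    exact g.not_mapsTo_e1_e3 subset_rfl he1 (hg ▸ Set.mapsTo_image g.app e1)
  · rintro ⟨g, a, b, c, d, hab, -, ha, hc, hg⟩
    exact g.not_mapsTo_e1_e3 ha (openSegment_nontrivial hab)
      ((hg ▸ Set.mapsTo_image g.app _).mono_right hc)
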